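/- arXiv:1506.05022 — 5 statements merged into one kernel-verified Lean document; each statement's English description precedes it below -/
import Mathlib

section
/- Let P₁, ..., Pₘ be pairwise commuting invertible 2×2 complex matrices and k₁, ..., kₘ positive integers. Then there exist 2×2 complex matrices Q₁, ..., Qₘ such that Qₐ^{kₐ} = Pₐ for each α and the Qₐ pairwise commute. -/
open Polynomial

lemma commute_aeval_right {R : Type*} [Ring R] [Algebra ℂ R] {x y : R}
    (h : Commute x y) (f : ℂ[X]) : Commute y (Polynomial.aeval x f) := by
  induction f using Polynomial.induction_on' with
  | add p q hp hq => simpa [map_add] using hp.add_right hq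
  | monomial n c =>
      rw [Polynomial.aeval_monomial]
      exact (Algebra.commute_algebraMap_right c y).mul_right (h.symm.pow_right n)

lemma commute_aeval {R : Type*} [Ring R] [Algebra ℂ R] {x y : R}
    (h : Commute x y) (f g : ℂ[X]) :
    Commute (Polynomial.aeval x f) (Polynomial.aeval y g) :=
  (commute_aeval_right (commute_aeval_right h f) g)

lemma step_pow (a c lam : ℂ) (f : ℂ[X]) (hf : f = C a + C c * (X - C lam)) :
    ∀ j : ℕ, ∃ r : ℂ[X], f ^ (j + 1) =
      C (a ^ (j + 1)) + C ((j + 1 : ℂ) * a ^ j * c) * (X - C lam) + (X - C lam) ^ 2 * r := by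
  intro j
  induction j with
  | zero => exact ⟨0, by simp [hf]⟩
  | succ n ih =>
      obtain ⟨r, hr⟩ := ih
      refine ⟨C a * r + C c * (X - C lam) * r + C (c * ((n + 1 : ℂ) * a ^ n * c)), ?_⟩
      have : f ^ (n + 1 + 1) = f * f ^ (n + 1) := by ring
      rw [this, hr, hf]
      push_cast
      simp only [map_add, map_mul, map_pow, map_one]
      ring

lemma exists_poly_root (P : Matrix (Fin 2) (Fin 2) ℂ) (hP : IsUnit P) (k : ℕ) (hk : 1 ≤ k) :
    ∃ f : ℂ[X], (Polynomial.aeval P f) ^ k = P := by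
  set p := P.charpoly with hp
  have hmon : p.Monic := P.charpoly_monic
  have hdeg : p.natDegree = 2 := by
    rw [hp, Matrix.charpoly_natDegree_eq_dim, Fintype.card_fin]
  have hdeg' : p.degree = 2 := by
    rw [Polynomial.degree_eq_natDegree hmon.ne_zero, hdeg]; rfl
  obtain ⟨lam, hlam⟩ := IsAlgClosed.exists_root p (by rw [hdeg']; norm_num)
  obtain ⟨q, hq⟩ := Polynomial.dvd_iff_isRoot.mpr hlam
  have hqmon : q.Monic := (Polynomial.monic_X_sub_C lam).of_mul_monic_left (hq ▸ hmon)
  have hqdeg : q.natDegree = 1 := by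
    have := hdeg
    rw [hq, Polynomial.natDegree_mul (Polynomial.X_sub_C_ne_zero lam) hqmon.ne_zero,
      Polynomial.natDegree_X_sub_C] at this
    omega
  set mu := -q.coeff 0 with hmu
  have hqform : q = X - C mu := by
    have h1 := Polynomial.eq_X_add_C_of_natDegree_le_one (le_of_eq hqdeg)
    have hc1 : q.coeff 1 = 1 := by
      have := hqmon.leadingCoeff
      rwa [Polynomial.leadingCoeff, hqdeg] at this
    rw [h1, hc1, hmu]; simp [map_neg]
  have hfac : p = (X - C lam) * (X - C mu) := by rw [hq, hqform]
  have hdet : P.det ≠ 0 := by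
    simpa [isUnit_iff_ne_zero] using (Matrix.isUnit_iff_isUnit_det P).mp hP
  have hprod : lam * mu = P.det := by
    have h0 : p.coeff 0 = p.eval 0 := by simp [Polynomial.coeff_zero_eq_eval_zero]
    have : P.det = p.coeff 0 := by
      rw [hp, Matrix.det_eq_sign_charpoly_coeff, Fintype.card_fin]; ring
    rw [this, h0, hfac]; simp
  have hlam0 : lam ≠ 0 := fun h => hdet (by rw [← hprod, h, zero_mul])
  have hmu0 : mu ≠ 0 := fun h => hdet (by rw [← hprod, h, mul_zero])
  have hCH : Polynomial.aeval P p = 0 := hp ▸ Matrix.aeval_self_charpoly P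
  obtain ⟨a, ha⟩ := IsAlgClosed.exists_pow_nat_eq lam (by omega : 0 < k)
  by_cases hlm : lam = mu
  · -- repeated eigenvalue
    obtain ⟨n, rfl⟩ : ∃ n, k = n + 1 := ⟨k - 1, by omega⟩
    have ha0 : a ≠ 0 := by
      intro h; apply hlam0; rw [← ha, h, zero_pow]; omega
    set c := ((n + 1 : ℂ) * a ^ n)⁻¹ with hc
    have hden : ((n + 1 : ℂ) * a ^ n) ≠ 0 := by
      exact mul_ne_zero (Nat.cast_add_one_ne_zero n) (pow_ne_zero _ ha0)
    set f : ℂ[X] := C a + C c * (X - C lam) with hf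
    obtain ⟨r, hr⟩ := step_pow a c lam f hf n
    have hcoef : ((n : ℂ) + 1) * a ^ n * c = 1 := by
      rw [hc]; field_simp
    have hfk : f ^ (n + 1) = X + (X - C lam) ^ 2 * r := by
      rw [hr, ha, hcoef, map_one]; ring
    refine ⟨f, ?_⟩
    have hz : (Polynomial.aeval P (X - C lam)) ^ 2 = 0 := by
      have h2 : Polynomial.aeval P ((X - C lam) * (X - C mu)) = 0 := hfac ▸ hCH
      rw [map_mul, ← hlm] at h2
      rw [sq]; exact h2
    calc (Polynomial.aeval P f) ^ (n + 1) = Polynomial.aeval P (f ^ (n + 1)) :=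
          (map_pow _ _ _).symm
      _ = P := by
          rw [hfk, map_add, map_mul, map_pow, Polynomial.aeval_X, hz, zero_mul, add_zero]
  · -- distinct eigenvalues
    obtain ⟨b, hb⟩ := IsAlgClosed.exists_pow_nat_eq mu (by omega : 0 < k)
    set c := (a - b) / (lam - mu) with hc
    set f : ℂ[X] := C c * X + C (a - c * lam) with hf
    have hevl : f.eval lam = a := by simp [hf]
    have hevm : f.eval mu = b := by
      simp only [hf, Polynomial.eval_add, Polynomial.eval_mul, Polynomial.eval_C,
        Polynomial.eval_X, hc]
      field_simp [sub_ne_zero.mpr hlm]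
      ring
    have hdvd : p ∣ f ^ k - X := by
      rw [hfac]
      refine IsCoprime.mul_dvd ?_ ?_ ?_
      · exact Polynomial.isCoprime_X_sub_C_of_isUnit_sub (sub_ne_zero.mpr hlm).isUnit
      · rw [Polynomial.dvd_iff_isRoot]
        simp [Polynomial.IsRoot, hevl, ha]
      · rw [Polynomial.dvd_iff_isRoot]
        simp [Polynomial.IsRoot, hevm, hb]
    obtain ⟨g, hg⟩ := hdvd
    refine ⟨f, ?_⟩
    have := congrArg (Polynomial.aeval P) hg
    rw [map_sub, map_pow, map_mul, Polynomial.aeval_X, hCH, zero_mul, sub_eq_zero] at this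
    exact this

theorem commuting_roots_of_commuting_invertible_two_by_two
    (m : ℕ) (P : Fin m → Matrix (Fin 2) (Fin 2) ℂ)
    (hcomm : ∀ α β : Fin m, P α * P β = P β * P α)
    (hinv : ∀ α, IsUnit (P α))
    (k : Fin m → ℕ) (hk : ∀ α, 1 ≤ k α) :
    ∃ Q : Fin m → Matrix (Fin 2) (Fin 2) ℂ,
      (∀ α, Q α ^ (k α) = P α) ∧
      (∀ α β, Q α * Q β = Q β * Q α) := by
  choose f hf using fun α => exists_poly_root (P α) (hinv α) (k α) (hk α)
  exact ⟨fun α => Polynomial.aeval (P α) (f α), hf,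
    fun α β => commute_aeval (hcomm α β) (f α) (f β)⟩
end

section
/- Let Q, S be invertible n×n matrices with S² = Iₙ and SQ = Q⁻¹S, and define for a fixed t₀ = (t₀¹, t₀²) ∈ ℤ² and fixed x₀ ∈ ℂⁿ the function x(t¹,t²) = Q^{t²} S^{t¹−t₀¹} Q^{−t₀²} x₀. Then x satisfies the double recurrence x(t¹+1, t²) = Q^{2t²}S · x(t¹,t²) and x(t¹, t²+1) = Q · x(t¹,t²) for all (t¹,t²) ∈ ℤ², and x(t₀) = x₀. -/
theorem explicit_solution_of_double_recurrence
    (n : ℕ) (Q S : GL (Fin n) ℂ)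
    (hS2 : S ^ 2 = 1) (hSQ : S * Q = Q⁻¹ * S)
    (t₀ : ℤ × ℤ) (x₀ : Fin n → ℂ)
    (x : ℤ × ℤ → Fin n → ℂ)
    (hx : ∀ t : ℤ × ℤ,
      x t = ((Q ^ t.2 * S ^ (t.1 - t₀.1) * Q ^ (-t₀.2) : GL (Fin n) ℂ) :
        Matrix (Fin n) (Fin n) ℂ).mulVec x₀) :
    (∀ t : ℤ × ℤ,
        x (t.1 + 1, t.2) =
          ((Q ^ (2 * t.2) * S : GL (Fin n) ℂ) : Matrix (Fin n) (Fin n) ℂ).mulVec (x t)) ∧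
    (∀ t : ℤ × ℤ,
        x (t.1, t.2 + 1) = ((Q : GL (Fin n) ℂ) : Matrix (Fin n) (Fin n) ℂ).mulVec (x t)) ∧
    x t₀ = x₀ := by
  have hconj : S * Q * S⁻¹ = Q⁻¹ := by
    rw [hSQ]; group
  have hk : ∀ k : ℤ, S * Q ^ k = Q ^ (-k) * S := by
    intro k
    have h1 : S * Q ^ k * S⁻¹ = (S * Q * S⁻¹) ^ k := (conj_zpow ..).symm
    rw [hconj, inv_zpow, ← zpow_neg] at h1
    calc S * Q ^ k = S * Q ^ k * S⁻¹ * S := by group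
    _ = Q ^ (-k) * S := by rw [h1]
  refine ⟨fun t => ?_, fun t => ?_, ?_⟩
  · rw [hx, hx]
    simp only [Matrix.mulVec_mulVec]
    congr 1
    rw [← Units.val_mul]
    congr 1
    have : Q ^ (2 * t.2) * S * (Q ^ t.2 * S ^ (t.1 - t₀.1) * Q ^ (-t₀.2))
        = Q ^ (2 * t.2) * (S * Q ^ t.2) * S ^ (t.1 - t₀.1) * Q ^ (-t₀.2) := by group
    rw [this, hk, show (2 : ℤ) * t.2 = t.2 + t.2 by ring, zpow_add]
    have hs : S * S ^ (t.1 - t₀.1) = S ^ (t.1 + 1 - t₀.1) := by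
      rw [show t.1 + 1 - t₀.1 = 1 + (t.1 - t₀.1) by ring, zpow_add, zpow_one]
    rw [← hs]; group
  · rw [hx, hx]
    simp only [Matrix.mulVec_mulVec]
    congr 1
    rw [← Units.val_mul]
    congr 1
    rw [show (t.2 + 1 : ℤ) = 1 + t.2 by ring, zpow_add, zpow_one]
    group
  · rw [hx]
    simp only [sub_self, zpow_zero, mul_one, zpow_neg]
    simp
end

section
/- Suppose x : {t ∈ ℤᵐ : t ≥ t₀} → Kⁿ satisfies x(t + 1_α) = A_α(t)x(t) for all t ≥ t₀ and all α, for every choice of initial point (t₀, x₀). Then the compatibility condition A_α(t + 1_β)A_β(t) = A_β(t + 1_α)A_α(t) holds for all t and all α, β ∈ {1,...,m}. -/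
theorem compatibility_of_solvability
    (m n : ℕ) (K : Type*) [Field K]
    (A : Fin m → (Fin m → ℤ) → Matrix (Fin n) (Fin n) K)
    (hsol : ∀ t₀ : Fin m → ℤ, ∀ x₀ : Fin n → K,
      ∃ x : (Fin m → ℤ) → (Fin n → K),
        (∀ t : Fin m → ℤ, t₀ ≤ t → ∀ α : Fin m,
          x (t + Pi.single α 1) = (A α t).mulVec (x t)) ∧
        x t₀ = x₀) :
    ∀ t : Fin m → ℤ, ∀ α β : Fin m,
      A α (t + Pi.single β 1) * A β t = A β (t + Pi.single α 1) * A α t := by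
  intro t α β
  ext i j
  obtain ⟨x, hx, hx0⟩ := hsol t (Pi.single j 1)
  have hle : ∀ γ : Fin m, t ≤ t + Pi.single γ 1 := by
    intro γ k
    simp only [Pi.add_apply]
    rcases eq_or_ne k γ with rfl | h
    · simp
    · simp [Pi.single_eq_of_ne h]
  have h1 : x (t + Pi.single β 1 + Pi.single α 1)
      = (A α (t + Pi.single β 1)).mulVec ((A β t).mulVec (Pi.single j 1)) := by
    rw [hx _ (hle β) α, hx _ le_rfl β, hx0]
  have h2 : x (t + Pi.single β 1 + Pi.single α 1)
      = (A β (t + Pi.single α 1)).mulVec ((A α t).mulVec (Pi.single j 1)) := by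
    have : t + Pi.single β 1 + Pi.single α 1 = t + Pi.single α 1 + Pi.single β 1 := by
      ring
    rw [this, hx _ (hle α) β, hx _ le_rfl α, hx0]
  have := h1.symm.trans h2
  rw [Matrix.mulVec_mulVec, Matrix.mulVec_mulVec] at this
  have := congrFun this i
  simpa [Matrix.mulVec_single] using this
end

section
/- Let A_α : ℤᵐ → GLₙ(K), α = 1,...,m, satisfy the compatibility conditions A_α(t+1_β)A_β(t) = A_β(t+1_α)A_α(t) for all t, α, β, and suppose each A_α is multi-periodic: A_α(t + T_β·1_β) = A_α(t) for all t, β, where T ∈ ℕᵐ, T ≠ 0. Let χ denote the fundamental matrix (χ(t,s) is the unique solution of X(t+1_α) = A_α(t)X(t), X(s) = Iₙ). Then χ(t + T_α·1_α, s) = χ(t, s)·χ(s + T_α·1_α, s) for all t ≥ s. -/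
theorem floquet_identity_multiperiodic
    (m n : ℕ) (K : Type*) [Field K]
    (A : Fin m → (Fin m → ℤ) → Matrix (Fin n) (Fin n) K)
    (hcompat : ∀ t : Fin m → ℤ, ∀ α β : Fin m,
      A α (t + Pi.single β 1) * A β t = A β (t + Pi.single α 1) * A α t)
    (T : Fin m → ℕ) (hT : T ≠ 0)
    (hper : ∀ α β : Fin m, ∀ t : Fin m → ℤ,
      A α (t + Pi.single β (T β : ℤ)) = A α t)
    (χ : (Fin m → ℤ) → (Fin m → ℤ) → Matrix (Fin n) (Fin n) K)
    (hχ0 : ∀ s : Fin m → ℤ, χ s s = 1)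
    (hχ1 : ∀ s t : Fin m → ℤ, s ≤ t → ∀ α : Fin m,
      χ (t + Pi.single α 1) s = A α t * χ t s) :
    ∀ s t : Fin m → ℤ, s ≤ t → ∀ α : Fin m,
      χ (t + Pi.single α (T α : ℤ)) s = χ t s * χ (s + Pi.single α (T α : ℤ)) s := by
  intro s
  suffices H : ∀ k : ℕ, ∀ t : Fin m → ℤ, s ≤ t → (∑ i, (t i - s i)) = (k : ℤ) →
      ∀ α : Fin m, χ (t + Pi.single α (T α : ℤ)) s
        = χ t s * χ (s + Pi.single α (T α : ℤ)) s by
    intro t ht α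
    have hnn : (0:ℤ) ≤ ∑ i, (t i - s i) :=
      Finset.sum_nonneg (fun i _ => sub_nonneg.2 (ht i))
    obtain ⟨k, hk⟩ := Int.eq_ofNat_of_zero_le hnn
    exact H k t ht hk α
  intro k
  induction k with
  | zero =>
      intro t ht hsum α
      have hts : t = s := by
        have h0 : ∀ i ∈ Finset.univ, t i - s i = 0 := by
          refine (Finset.sum_eq_zero_iff_of_nonneg
            (fun i _ => sub_nonneg.2 (ht i))).1 ?_
          simpa using hsum
        funext i
        have := h0 i (Finset.mem_univ i)
        linarith
      subst hts
      rw [hχ0, one_mul]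
  | succ k ih =>
      intro t ht hsum α
      have hne : ∃ β : Fin m, s β < t β := by
        by_contra h
        push_neg at h
        have : ∀ i ∈ Finset.univ, t i - s i = 0 := fun i _ =>
          le_antisymm (sub_nonpos.2 (h i)) (sub_nonneg.2 (ht i))
        have := Finset.sum_eq_zero this
        rw [this] at hsum
        exact absurd hsum.symm (by exact_mod_cast Nat.succ_ne_zero k)
      obtain ⟨β, hβ⟩ := hne
      set t' : Fin m → ℤ := t - Pi.single β 1 with ht'def
      have htt' : t = t' + Pi.single β 1 := by
        simp [ht'def]
      have ht's : s ≤ t' := by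
        intro i
        by_cases hib : i = β
        · subst hib
          simp [ht'def]
          omega
        · simpa [ht'def, Pi.single_apply, hib] using ht i
      have hsum' : (∑ i, (t' i - s i)) = (k : ℤ) := by
        have : (∑ i, (t' i - s i)) = (∑ i, (t i - s i)) - 1 := by
          rw [Finset.sum_sub_distrib, Finset.sum_sub_distrib]
          have : ∑ i, t' i = (∑ i, t i) - 1 := by
            simp only [ht'def, Pi.sub_apply]
            rw [Finset.sum_sub_distrib]
            simp [Finset.sum_pi_single]
          rw [this]; ring
        rw [this, hsum]
        push_cast
        ring
      have key := ih t' ht's hsum' α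
      have hle : s ≤ t' + Pi.single α (T α : ℤ) := by
        intro i
        have h0 : (0:ℤ) ≤ (Pi.single α (T α : ℤ) : Fin m → ℤ) i := by
          by_cases hia : i = α
          · subst hia; simp
          · simp [Pi.single_apply, hia]
        have h1 := ht's i
        simp only [Pi.add_apply]
        linarith
      calc χ (t + Pi.single α (T α : ℤ)) s
          = χ ((t' + Pi.single α (T α : ℤ)) + Pi.single β 1) s := by
            rw [htt']; ring_nf
        _ = A β (t' + Pi.single α (T α : ℤ)) * χ (t' + Pi.single α (T α : ℤ)) s :=
            hχ1 s _ hle β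
        _ = A β t' * (χ t' s * χ (s + Pi.single α (T α : ℤ)) s) := by
            rw [hper β α t', key]
        _ = (A β t' * χ t' s) * χ (s + Pi.single α (T α : ℤ)) s := by
            rw [mul_assoc]
        _ = χ (t' + Pi.single β 1) s * χ (s + Pi.single α (T α : ℤ)) s := by
            rw [hχ1 s t' ht's β]
        _ = χ t s * χ (s + Pi.single α (T α : ℤ)) s := by rw [← htt']
end

section
/- Under the hypotheses of the multi-periodic compatibility setting (A_α : ℤᵐ → Mₙ(K) satisfying A_α(t+1_β)A_β(t) = A_β(t+1_α)A_α(t) and A_α(t + T_β·1_β) = A_α(t) for all α, β, t, with T ∈ ℕᵐ \ {0}), the matrices C̃_α := C_{α,T_α}(t₀) pairwise commute: C̃_α C̃_β = C̃_β C̃_α for all α, β. -/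
/-- `Cmat A α k t = A α (t+(k-1)·1_α) ⋯ A α (t+1_α) · A α t`, with `Cmat A α 0 t = 1`. -/
def Cmat {m n : ℕ} {K : Type*} [Field K]
    (A : Fin m → (Fin m → ℤ) → Matrix (Fin n) (Fin n) K)
    (α : Fin m) : ℕ → (Fin m → ℤ) → Matrix (Fin n) (Fin n) K
  | 0, _ => 1
  | k + 1, t => A α (t + Pi.single α (k : ℤ)) * Cmat A α k t

lemma Cmat_swap {m n : ℕ} {K : Type*} [Field K]
    (A : Fin m → (Fin m → ℤ) → Matrix (Fin n) (Fin n) K)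
    (hcompat : ∀ t : Fin m → ℤ, ∀ α β : Fin m,
      A α (t + Pi.single β 1) * A β t = A β (t + Pi.single α 1) * A α t)
    (α β : Fin m) : ∀ p : ℕ, ∀ t : Fin m → ℤ,
      A α (t + Pi.single β (p : ℤ)) * Cmat A β p t
        = Cmat A β p (t + Pi.single α 1) * A α t := by
  intro p
  induction p with
  | zero => intro t; simp [Cmat]
  | succ p ih =>
      intro t
      have h1 : (Pi.single β ((p + 1 : ℕ) : ℤ) : Fin m → ℤ) = Pi.single β (p : ℤ) + Pi.single β 1 := by
        push_cast; rw [Pi.single_add]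
      rw [Cmat, Cmat, h1]
      have h2 : t + (Pi.single β (p : ℤ) + Pi.single β 1)
          = (t + Pi.single β (p : ℤ)) + Pi.single β 1 := by abel
      rw [h2, Matrix.mul_assoc, ← Matrix.mul_assoc (A α _),
        hcompat (t + (Pi.single β (p : ℤ) : Fin m → ℤ)) α β, Matrix.mul_assoc, ih t]
      have h3 : t + Pi.single β (p : ℤ) + Pi.single α 1
          = t + Pi.single α 1 + Pi.single β (p : ℤ) := by abel
      rw [h3, ← Matrix.mul_assoc]

lemma Cmat_comm_key {m n : ℕ} {K : Type*} [Field K]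
    (A : Fin m → (Fin m → ℤ) → Matrix (Fin n) (Fin n) K)
    (hcompat : ∀ t : Fin m → ℤ, ∀ α β : Fin m,
      A α (t + Pi.single β 1) * A β t = A β (t + Pi.single α 1) * A α t)
    (α β : Fin m) (p : ℕ) : ∀ k : ℕ, ∀ t : Fin m → ℤ,
      Cmat A α k (t + Pi.single β (p : ℤ)) * Cmat A β p t
        = Cmat A β p (t + Pi.single α (k : ℤ)) * Cmat A α k t := by
  intro k
  induction k with
  | zero => intro t; simp [Cmat]
  | succ k ih =>
      intro t
      have h1 : (Pi.single α ((k + 1 : ℕ) : ℤ) : Fin m → ℤ) = Pi.single α (k : ℤ) + Pi.single α 1 := by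
        push_cast; rw [Pi.single_add]
      rw [Cmat, Cmat, h1]
      have h2 : t + Pi.single β (p : ℤ) + Pi.single α (k : ℤ)
          = (t + Pi.single α (k : ℤ)) + Pi.single β (p : ℤ) := by abel
      rw [Matrix.mul_assoc, ih t, h2, ← Matrix.mul_assoc,
        Cmat_swap A hcompat α β p (t + (Pi.single α (k : ℤ) : Fin m → ℤ))]
      have h3 : t + Pi.single α (k : ℤ) + Pi.single α 1
          = t + (Pi.single α (k : ℤ) + Pi.single α 1) := by abel
      rw [h3, Matrix.mul_assoc]

lemma Cmat_per {m n : ℕ} {K : Type*} [Field K]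
    (A : Fin m → (Fin m → ℤ) → Matrix (Fin n) (Fin n) K)
    (T : Fin m → ℕ)
    (hper : ∀ α β : Fin m, ∀ t : Fin m → ℤ,
      A α (t + Pi.single β (T β : ℤ)) = A α t)
    (α β : Fin m) : ∀ k : ℕ, ∀ t : Fin m → ℤ,
      Cmat A α k (t + Pi.single β (T β : ℤ)) = Cmat A α k t := by
  intro k
  induction k with
  | zero => intro t; simp [Cmat]
  | succ k ih =>
      intro t
      rw [Cmat, Cmat, ih t]
      congr 1
      have h2 : t + Pi.single β (T β : ℤ) + Pi.single α (k : ℤ)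
          = (t + Pi.single α (k : ℤ)) + Pi.single β (T β : ℤ) := by abel
      rw [h2, hper]

theorem monodromy_matrices_commute
    (m n : ℕ) (K : Type*) [Field K]
    (A : Fin m → (Fin m → ℤ) → Matrix (Fin n) (Fin n) K)
    (hcompat : ∀ t : Fin m → ℤ, ∀ α β : Fin m,
      A α (t + Pi.single β 1) * A β t = A β (t + Pi.single α 1) * A α t)
    (T : Fin m → ℕ) (hT : T ≠ 0)
    (hper : ∀ α β : Fin m, ∀ t : Fin m → ℤ,
      A α (t + Pi.single β (T β : ℤ)) = A α t)
    (t₀ : Fin m → ℤ) :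
    ∀ α β : Fin m,
      Cmat A α (T α) t₀ * Cmat A β (T β) t₀
        = Cmat A β (T β) t₀ * Cmat A α (T α) t₀ := by
  intro α β
  have h := Cmat_comm_key A hcompat α β (T β) (T α) t₀
  rwa [Cmat_per A T hper α β, Cmat_per A T hper β α] at h
end
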